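/- For i.i.d. uniform opinions the threshold ε_high converges to one half: let U_1, …, U_n be i.i.d. uniform on [0,1] with order statistics U_{(1)} ≤ … ≤ U_{(n)}, and define E_n := max_{k∈{1,…,n−1}} ( (1/(n−k))·Σ_{i=k+1}^n U_{(i)} − (1/k)·Σ_{j=1}^k U_{(j)} ). Then E_n → 1/2 in probability as n → ∞. -/

import Mathlib

open Filter MeasureTheory ProbabilityTheory

/-- The nondecreasing rearrangement (order statistics) of a finite tuple of reals. -/
noncomputable def sortedTuple {m : ℕ} (f : Fin m → ℝ) : Fin m → ℝ :=
  f ∘ Tuple.sort f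

/-- For a tuple of `n` reals, the maximum over split points `k ∈ {1,…,n-1}` of the
difference between the mean of the upper `n-k` order statistics and the mean of the
lower `k` order statistics (the threshold `ε_high`). -/
noncomputable def epsHigh {n : ℕ} (f : Fin n → ℝ) : ℝ :=
  ⨆ kk : Fin (n - 1),
    ((∑ i : Fin n, if (kk : ℕ) < (i : ℕ) then sortedTuple f i else 0) /
        ((n : ℝ) - ((kk : ℕ) + 1)) -
     (∑ i : Fin n, if (i : ℕ) ≤ (kk : ℕ) then sortedTuple f i else 0) /
        (((kk : ℕ) : ℝ) + 1))

/-!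
Almost surely, by the strong law of large numbers applied to the indicators of `(-∞, q]` and
`(-∞, q)` for rational `q`, the empirical distribution functions of `U_1, …, U_n` converge to
`t ↦ t` at every rational point of `[0,1]`, hence uniformly on `[0,1]`, since they are monotone
and the limit is continuous. Uniform closeness within `η` pins the `i`-th order statistic within
`η` of `i/n`. For the profile `i ↦ i/n` every split has gap exactly `1/2`, and the gap of a split
moves by at most `2η` when the profile moves by `η`; so `ε_high → 1/2` almost surely, hence in
probability.
-/

open Finset Topology BigOperators

section OrderStatistics

variable {n : ℕ}

lemma Monotone.le_iff_lt_card_filter_le {α : Type*} [LinearOrder α] {g : Fin n → α}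
    (hg : Monotone g) (i : Fin n) (t : α) : g i ≤ t ↔ (i : ℕ) < #{j | g j ≤ t} := by
  constructor
  · intro h
    have hsub : Iic i ⊆ ({j | g j ≤ t} : Finset (Fin n)) := fun j hj ↦
      mem_filter.2 ⟨mem_univ j, (hg (mem_Iic.1 hj)).trans h⟩
    have := card_le_card hsub
    rw [Fin.card_Iic] at this
    omega
  · intro h
    by_contra! hlt
    have hsub : ({j | g j ≤ t} : Finset (Fin n)) ⊆ Iio i := fun j hj ↦
      mem_Iio.2 (lt_of_not_ge fun hij ↦ (hlt.trans_le (hg hij)).not_ge (mem_filter.1 hj).2)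
    have := card_le_card hsub
    simp only [Fin.card_Iio] at this
    omega

lemma Monotone.card_filter_lt_le {α : Type*} [LinearOrder α] {g : Fin n → α}
    (hg : Monotone g) (i : Fin n) : #{j | g j < g i} ≤ i := by
  have hsub : ({j | g j < g i} : Finset (Fin n)) ⊆ Iio i := fun j hj ↦
    mem_Iio.2 (lt_of_not_ge fun hij ↦ (hg hij).not_gt (mem_filter.1 hj).2)
  simpa using card_le_card hsub

lemma card_filter_sortedTuple (f : Fin n → ℝ) (p : ℝ → Prop) [DecidablePred p] :
    #{i | p (sortedTuple f i)} = #{i | p (f i)} := by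
  simp only [card_filter]
  exact Equiv.sum_comp (Tuple.sort f) (fun i ↦ if p (f i) then 1 else 0)

lemma sortedTuple_le_iff (f : Fin n → ℝ) (i : Fin n) (t : ℝ) :
    sortedTuple f i ≤ t ↔ (i : ℕ) < #{j | f j ≤ t} := by
  rw [← card_filter_sortedTuple f (· ≤ t)]
  exact (Tuple.monotone_sort f).le_iff_lt_card_filter_le i t

lemma card_filter_lt_sortedTuple_le (f : Fin n → ℝ) (i : Fin n) :
    #{j | f j < sortedTuple f i} ≤ i := by
  rw [← card_filter_sortedTuple f (· < sortedTuple f i)]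
  exact (Tuple.monotone_sort f).card_filter_lt_le i

lemma measurable_sortedTuple : Measurable (sortedTuple : (Fin n → ℝ) → Fin n → ℝ) := by
  refine measurable_pi_lambda _ fun i ↦ measurable_of_Iic fun t ↦ ?_
  have hpre : (fun f ↦ sortedTuple f i) ⁻¹' Set.Iic t = {f | (i : ℕ) < #{j | f j ≤ t}} :=
    Set.ext fun f ↦ sortedTuple_le_iff f i t
  rw [hpre]
  refine measurableSet_lt measurable_const ?_
  simp only [card_filter]
  exact Finset.measurable_sum _ fun j _ ↦
    Measurable.ite (measurableSet_le (measurable_pi_apply j) measurable_const)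
      measurable_const measurable_const

end OrderStatistics

noncomputable def empiricalFreq {E : Type*} {n : ℕ} (x : Fin n → E) (S : Set E) : ℝ :=
  (∑ i, S.indicator 1 (x i)) / n

lemma empiricalFreq_mono {E : Type*} {n : ℕ} (x : Fin n → E) : Monotone (empiricalFreq x) :=
  fun _ _ hST ↦ div_le_div_of_nonneg_right
    (sum_le_sum fun _ _ ↦ Set.indicator_le_indicator_of_subset hST (fun _ ↦ zero_le_one) _)
    (Nat.cast_nonneg n)

open Classical in
lemma empiricalFreq_eq_card_div {E : Type*} {n : ℕ} (x : Fin n → E) (S : Set E) :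
    empiricalFreq x S = #{i | x i ∈ S} / n := by
  simp [empiricalFreq, Set.indicator_apply, sum_boole]

lemma abs_sortedTuple_sub_le {n : ℕ} {f : Fin n → ℝ} {η : ℝ} (hf : ∀ i, f i ∈ Set.Icc 0 1)
    (hle : ∀ t ∈ Set.Icc (0 : ℝ) 1, |empiricalFreq f (Set.Iic t) - t| ≤ η)
    (hlt : ∀ t ∈ Set.Icc (0 : ℝ) 1, |empiricalFreq f (Set.Iio t) - t| ≤ η) (i : Fin n) :
    |sortedTuple f i - i / n| ≤ η := by
  set s := sortedTuple f i
  have hs : s ∈ Set.Icc (0 : ℝ) 1 := hf _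
  have hcard_le : ((i + 1 : ℕ) : ℝ) / n ≤ #{j | f j ≤ s} / n := by
    gcongr
    exact_mod_cast (sortedTuple_le_iff f i s).1 le_rfl
  have hcard_lt : (#{j | f j < s} : ℝ) / n ≤ i / n := by
    gcongr
    exact_mod_cast card_filter_lt_sortedTuple_le f i
  have h₁ := (abs_le.1 (hle s hs)).2
  have h₂ := (abs_le.1 (hlt s hs)).1
  simp only [empiricalFreq_eq_card_div, Set.mem_Iic, Set.mem_Iio] at h₁ h₂
  have hi : (i : ℝ) / n ≤ ((i + 1 : ℕ) : ℝ) / n := by gcongr; simp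
  rw [abs_le]
  constructor <;> linarith

section SplitGap

variable {n : ℕ}

noncomputable def splitGap (x : Fin n → ℝ) (k : Fin (n - 1)) : ℝ :=
  (∑ i : Fin n, if (k : ℕ) < (i : ℕ) then x i else 0) / ((n : ℝ) - ((k : ℕ) + 1)) -
    (∑ i : Fin n, if (i : ℕ) ≤ (k : ℕ) then x i else 0) / (((k : ℕ) : ℝ) + 1)

lemma epsHigh_eq_iSup_splitGap (f : Fin n → ℝ) :
    epsHigh f = ⨆ k, splitGap (sortedTuple f) k :=
  rfl

lemma card_filter_fin_le (k : Fin (n - 1)) : #{i : Fin n | (i : ℕ) ≤ k} = (k : ℕ) + 1 := by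
  have : ({i : Fin n | (i : ℕ) ≤ k} : Finset (Fin n)) = Iic ⟨k, by omega⟩ := by
    ext i; simp [Fin.le_def]
  rw [this, Fin.card_Iic]

lemma card_filter_fin_lt (k : Fin (n - 1)) :
    #{i : Fin n | (k : ℕ) < i} = n - ((k : ℕ) + 1) := by
  have := card_filter_add_card_filter_not (s := (univ : Finset (Fin n))) (fun i ↦ (i : ℕ) ≤ k)
  simp only [not_le, card_filter_fin_le, card_univ, Fintype.card_fin] at this
  omega

lemma splitGap_eq_expect_sub_expect (x : Fin n → ℝ) (k : Fin (n - 1)) :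
    splitGap x k =
      (𝔼 i ∈ {i : Fin n | (k : ℕ) < i}, x i) - 𝔼 i ∈ {i : Fin n | (i : ℕ) ≤ k}, x i := by
  have hk : (k : ℕ) + 1 ≤ n := by omega
  simp only [splitGap, expect_eq_sum_div_card, sum_filter, card_filter_fin_le,
    card_filter_fin_lt, Nat.cast_sub hk]
  push_cast
  rfl

lemma abs_splitGap_sub_splitGap_le {x y : Fin n → ℝ} {δ : ℝ} (h : ∀ i, |x i - y i| ≤ δ)
    (k : Fin (n - 1)) : |splitGap x k - splitGap y k| ≤ 2 * δ := by
  have hmean : ∀ s : Finset (Fin n), s.Nonempty → |𝔼 i ∈ s, x i - 𝔼 i ∈ s, y i| ≤ δ := by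
    intro s hs
    rw [← expect_sub_distrib]
    exact (abs_expect_le s _).trans (expect_le hs fun i _ ↦ h i)
  have hk := k.isLt
  have hup := hmean {i : Fin n | (k : ℕ) < i} ⟨⟨n - 1, by omega⟩, by simp⟩
  have hlow := hmean {i : Fin n | (i : ℕ) ≤ k} ⟨⟨0, by omega⟩, by simp⟩
  rw [splitGap_eq_expect_sub_expect, splitGap_eq_expect_sub_expect]
  rw [abs_le] at hup hlow ⊢
  constructor <;> linarith

lemma sum_range_natCast (m : ℕ) : ∑ j ∈ range m, (j : ℝ) = m * (m - 1) / 2 := by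
  induction m with
  | zero => simp
  | succ m ih => rw [sum_range_succ, ih]; push_cast; ring

lemma splitGap_natCast_div (k : Fin (n - 1)) : splitGap (fun i ↦ (i : ℝ) / n) k = 1 / 2 := by
  have hk := k.isLt
  have hlow : ∑ i : Fin n, (if (i : ℕ) ≤ k then (i : ℝ) else 0) = ((k : ℕ) + 1) * k / 2 := by
    rw [Fin.sum_univ_eq_sum_range (fun j ↦ if j ≤ k then (j : ℝ) else 0), ← sum_filter,
      show (range n).filter (· ≤ (k : ℕ)) = range (k + 1) by ext; simp; omega, sum_range_natCast]
    push_cast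
    ring
  have hall : ∑ i : Fin n, (i : ℝ) = n * (n - 1) / 2 := by
    rw [Fin.sum_univ_eq_sum_range (fun j ↦ (j : ℝ)), sum_range_natCast]
  have hup : ∑ i : Fin n, (if (k : ℕ) < i then (i : ℝ) else 0) =
      n * (n - 1) / 2 - ((k : ℕ) + 1) * k / 2 := by
    rw [← hall, ← hlow, ← sum_filter, ← sum_filter, eq_sub_iff_add_eq,
      ← sum_filter_add_sum_filter_not univ fun i : Fin n ↦ (k : ℕ) < i]
    simp only [not_lt]
  have hkn : ((k : ℕ) : ℝ) + 1 < n := by exact_mod_cast (by omega : (k : ℕ) + 1 < n)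
  have hup_ne : (n : ℝ) - ((k : ℕ) + 1) ≠ 0 := by linarith
  have hn_ne : (n : ℝ) ≠ 0 := by linarith
  have hdiv (p : Prop) [Decidable p] (a : ℝ) :
      (if p then a / n else 0) = (if p then a else 0) / n := by
    split_ifs <;> simp
  simp only [splitGap, hdiv, ← sum_div, hlow, hup]
  field_simp
  ring

end SplitGap

lemma abs_epsHigh_sub_half_le {n : ℕ} (hn : 2 ≤ n) {f : Fin n → ℝ} {δ : ℝ}
    (h : ∀ i, |sortedTuple f i - i / n| ≤ δ) : |epsHigh f - 1 / 2| ≤ 2 * δ := by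
  have hgap (k : Fin (n - 1)) : |splitGap (sortedTuple f) k - 1 / 2| ≤ 2 * δ :=
    splitGap_natCast_div k ▸ abs_splitGap_sub_splitGap_le h k
  let k₀ : Fin (n - 1) := ⟨0, by omega⟩
  have : Nonempty (Fin (n - 1)) := ⟨k₀⟩
  have hlow := le_ciSup (Set.finite_range (splitGap (sortedTuple f))).bddAbove k₀
  have hup : ⨆ k, splitGap (sortedTuple f) k ≤ 1 / 2 + 2 * δ :=
    ciSup_le fun k ↦ by linarith [(abs_le.1 (hgap k)).2]
  rw [epsHigh_eq_iSup_splitGap, abs_le]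
  constructor <;> linarith [(abs_le.1 (hgap k₀)).1]

lemma measurable_epsHigh {n : ℕ} : Measurable (epsHigh : (Fin n → ℝ) → ℝ) := by
  have hgap (k : Fin (n - 1)) : Measurable fun x : Fin n → ℝ ↦ splitGap x k := by
    simp only [splitGap, ← sum_filter]
    fun_prop
  exact Measurable.iSup fun k ↦ (hgap k).comp measurable_sortedTuple

lemma tendstoUniformlyOn_Icc_of_monotone {ι : Type*} {l : Filter ι} {φ : ι → ℝ → ℝ}
    (hφ : ∀ n, Monotone (φ n))
    (h : ∀ q : ℚ, (q : ℝ) ∈ Set.Icc 0 1 → Tendsto (fun n ↦ φ n q) l (𝓝 q)) :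
    TendstoUniformlyOn φ id l (Set.Icc 0 1) := by
  rw [Metric.tendstoUniformlyOn_iff]
  intro ε hε
  obtain ⟨m, hm⟩ := exists_nat_gt (2 / ε)
  have hm0 : (0 : ℝ) < m := (div_pos two_pos hε).trans hm
  have hgrid : ∀ᶠ n in l, ∀ j ∈ range (m + 1), |φ n (j / m) - j / m| < 1 / m := by
    rw [eventually_all_finset]
    intro j hj
    have hjm : (j : ℝ) ≤ m := by exact_mod_cast mem_range_succ_iff.1 hj
    have hq := h (j / m) (by push_cast; exact ⟨by positivity, div_le_one_of_le₀ hjm hm0.le⟩)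
    push_cast at hq
    exact (Metric.tendsto_nhds.1 hq _ (one_div_pos.2 hm0)).mono fun n hn ↦ hn
  filter_upwards [hgrid] with n hn t ht
  have htm : 0 ≤ t * m := mul_nonneg ht.1 hm0.le
  have hfloor : ((⌊t * m⌋₊ : ℕ) : ℝ) / m ≤ t := by
    rw [div_le_iff₀ hm0]; exact Nat.floor_le htm
  have hceil : t ≤ ((⌈t * m⌉₊ : ℕ) : ℝ) / m := by
    rw [le_div_iff₀ hm0]; exact Nat.le_ceil _
  have hgap : ((⌈t * m⌉₊ : ℕ) : ℝ) / m ≤ ((⌊t * m⌋₊ : ℕ) : ℝ) / m + 1 / m := by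
    rw [← add_div]; gcongr; exact_mod_cast Nat.ceil_le_floor_add_one _
  have hceil_le : ⌈t * m⌉₊ ≤ m := Nat.ceil_le.2 (by nlinarith [ht.2])
  have h₁ := (abs_lt.1 (hn _ (mem_range_succ_iff.2 ((Nat.floor_le_ceil _).trans hceil_le)))).1
  have h₂ := (abs_lt.1 (hn _ (mem_range_succ_iff.2 hceil_le))).2
  have h₃ := hφ n hfloor
  have h₄ := hφ n hceil
  have hεm : 1 / m + 1 / m < ε := by
    rwa [← add_div, one_add_one_eq_two, div_lt_iff₀ hm0, mul_comm, ← div_lt_iff₀ hε]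
  rw [Real.dist_eq, id, abs_lt]
  constructor <;> linarith

lemma tendsto_epsHigh_of_tendstoUniformlyOn {x : (n : ℕ) → Fin n → ℝ}
    (hx : ∀ n i, x n i ∈ Set.Icc 0 1)
    (hle : TendstoUniformlyOn (fun n t ↦ empiricalFreq (x n) (Set.Iic t)) id atTop
      (Set.Icc 0 1))
    (hlt : TendstoUniformlyOn (fun n t ↦ empiricalFreq (x n) (Set.Iio t)) id atTop
      (Set.Icc 0 1)) :
    Tendsto (fun n ↦ epsHigh (x n)) atTop (𝓝 (1 / 2)) := by
  rw [Metric.tendsto_nhds]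
  intro ε hε
  filter_upwards [eventually_ge_atTop 2,
    Metric.tendstoUniformlyOn_iff.1 hle (ε / 4) (by positivity),
    Metric.tendstoUniformlyOn_iff.1 hlt (ε / 4) (by positivity)] with n hn hle hlt
  have hsorted := abs_sortedTuple_sub_le (hx n)
    (fun t ht ↦ by rw [← Real.dist_eq, dist_comm]; exact (hle t ht).le)
    (fun t ht ↦ by rw [← Real.dist_eq, dist_comm]; exact (hlt t ht).le)
  rw [Real.dist_eq]
  linarith [abs_epsHigh_sub_half_le hn hsorted]

lemma ae_tendsto_empiricalFreq {Ω E : Type*} [MeasurableSpace Ω] [MeasurableSpace E]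
    {P : Measure Ω} [IsFiniteMeasure P] {U : ℕ → Ω → E}
    (hindep : Pairwise fun i j ↦ IndepFun (U i) (U j) P)
    (hident : ∀ i, IdentDistrib (U i) (U 0) P P) {S : Set E} (hS : MeasurableSet S) :
    ∀ᵐ ω ∂P, Tendsto (fun n : ℕ ↦ empiricalFreq (fun i : Fin n ↦ U i ω) S) atTop
      (𝓝 ((P.map (U 0)).real S)) := by
  have hg : Measurable (S.indicator (1 : E → ℝ)) := measurable_one.indicator hS
  have hU₀ : AEMeasurable (U 0) P := (hident 0).aemeasurable_fst
  have hint : Integrable (S.indicator 1 ∘ U 0) P :=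
    (integrable_map_measure hg.aestronglyMeasurable hU₀).1 ((integrable_const 1).indicator hS)
  have hmean : P[S.indicator 1 ∘ U 0] = (P.map (U 0)).real S := by
    rw [← integral_indicator_one hS, integral_map hU₀ hg.aestronglyMeasurable]
    rfl
  have hlln := strong_law_ae_real (fun i ↦ S.indicator 1 ∘ U i) hint
    (fun i j hij ↦ (hindep hij).comp hg hg) (fun i ↦ (hident i).comp hg)
  filter_upwards [hlln] with ω hω
  rw [hmean] at hω
  simpa [empiricalFreq, Fin.sum_univ_eq_sum_range fun i ↦ S.indicator 1 (U i ω)] using hω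

lemma volume_restrict_Icc_real_Iic {t : ℝ} (ht : t ∈ Set.Icc (0 : ℝ) 1) :
    (volume.restrict (Set.Icc (0 : ℝ) 1)).real (Set.Iic t) = t := by
  have hinter : Set.Iic t ∩ Set.Icc 0 1 = Set.Icc 0 t :=
    Set.ext fun x ↦ ⟨fun h ↦ ⟨h.2.1, h.1⟩, fun h ↦ ⟨h.2, h.1, h.2.trans ht.2⟩⟩
  rw [measureReal_restrict_apply measurableSet_Iic, hinter, Real.volume_real_Icc_of_le ht.1,
    sub_zero]

lemma volume_restrict_Icc_real_Iio {t : ℝ} (ht : t ∈ Set.Icc (0 : ℝ) 1) :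
    (volume.restrict (Set.Icc (0 : ℝ) 1)).real (Set.Iio t) = t := by
  rw [measureReal_congr Iio_ae_eq_Iic, volume_restrict_Icc_real_Iic ht]

lemma ae_tendstoUniformlyOn_empiricalFreq_Iic_Iio {Ω : Type*} [MeasurableSpace Ω]
    {P : Measure Ω} [IsFiniteMeasure P] {U : ℕ → Ω → ℝ} (hmeas : ∀ i, Measurable (U i))
    (hindep : Pairwise fun i j ↦ IndepFun (U i) (U j) P)
    (hunif : ∀ i, P.map (U i) = volume.restrict (Set.Icc (0 : ℝ) 1)) :
    ∀ᵐ ω ∂P,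
      TendstoUniformlyOn (fun n t ↦ empiricalFreq (fun i : Fin n ↦ U i ω) (Set.Iic t)) id atTop
        (Set.Icc 0 1) ∧
      TendstoUniformlyOn (fun n t ↦ empiricalFreq (fun i : Fin n ↦ U i ω) (Set.Iio t)) id atTop
        (Set.Icc 0 1) := by
  have hident (i : ℕ) : IdentDistrib (U i) (U 0) P P :=
    ⟨(hmeas i).aemeasurable, (hmeas 0).aemeasurable, by rw [hunif i, hunif 0]⟩
  have hrat : ∀ᵐ ω ∂P, ∀ q : ℚ, (q : ℝ) ∈ Set.Icc 0 1 →
      Tendsto (fun n : ℕ ↦ empiricalFreq (fun i : Fin n ↦ U i ω) (Set.Iic q)) atTop (𝓝 q) ∧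
      Tendsto (fun n : ℕ ↦ empiricalFreq (fun i : Fin n ↦ U i ω) (Set.Iio q)) atTop (𝓝 q) := by
    refine ae_all_iff.2 fun q ↦ eventually_imp_distrib_left.2 fun hq ↦ ?_
    have hle := ae_tendsto_empiricalFreq hindep hident (measurableSet_Iic (a := (q : ℝ)))
    have hlt := ae_tendsto_empiricalFreq hindep hident (measurableSet_Iio (a := (q : ℝ)))
    rw [hunif 0, volume_restrict_Icc_real_Iic hq] at hle
    rw [hunif 0, volume_restrict_Icc_real_Iio hq] at hlt
    exact hle.and hlt
  filter_upwards [hrat] with ω hω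
  exact ⟨tendstoUniformlyOn_Icc_of_monotone
      (fun _ _ _ hst ↦ empiricalFreq_mono _ (Set.Iic_subset_Iic.2 hst)) fun q hq ↦ (hω q hq).1,
    tendstoUniformlyOn_Icc_of_monotone
      (fun _ _ _ hst ↦ empiricalFreq_mono _ (Set.Iio_subset_Iio hst)) fun q hq ↦ (hω q hq).2⟩

/-- for `n` i.i.d. uniform opinions on `[0,1]`, the threshold
`ε_high = max_k (upper-group mean − lower-group mean)` converges to `1/2`
in probability as `n → ∞`. -/
theorem epsHigh_tendsto_half_in_probability {Ω : Type*} [MeasurableSpace Ω]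
    (P : Measure Ω) [IsProbabilityMeasure P]
    (U : ℕ → Ω → ℝ)
    (hmeas : ∀ i, Measurable (U i))
    (hindep : iIndepFun U P)
    (hunif : ∀ i, Measure.map (U i) P = volume.restrict (Set.Icc (0 : ℝ) 1)) :
    TendstoInMeasure P (fun (n : ℕ) (ω : Ω) => epsHigh (fun i : Fin n => U i ω))
      atTop (fun _ => 1 / 2) := by
  have hrange : ∀ᵐ ω ∂P, ∀ i, U i ω ∈ Set.Icc 0 1 := ae_all_iff.2 fun i ↦
    ae_of_ae_map (hmeas i).aemeasurable (hunif i ▸ ae_restrict_mem measurableSet_Icc)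
  have hcdf := ae_tendstoUniformlyOn_empiricalFreq_Iic_Iio hmeas
    (fun i j hij ↦ hindep.indepFun hij) hunif
  refine tendstoInMeasure_of_tendsto_ae (fun n ↦ (measurable_epsHigh.comp
    (measurable_pi_lambda _ fun i ↦ hmeas i)).aestronglyMeasurable) ?_
  filter_upwards [hrange, hcdf] with ω hω hω'
  exact tendsto_epsHigh_of_tendstoUniformlyOn (fun n i ↦ hω i) hω'.1 hω'.2
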